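/- Among all C² functions w : [a,b] → ℝ satisfying the boundary conditions w(a) = α₀, w'(a) = α₁, w(b) = β₀, w'(b) = β₁, the unique minimizer of J(w) = ∫ₐᵇ (w''(t))² dt is the cubic Hermite interpolant, i.e. the unique polynomial of degree at most 3 matching these four boundary conditions; equivalently, the minimizer satisfies w⁽⁴⁾ = 0 on [a,b]. -/

import Mathlib

/-!
Write the competitor as `w = p + h`, where `p` is the cubic Hermite interpolant and `h` vanishes
to first order at both endpoints. Integrating by parts twice, `∫ p'' h'' = [p'' h' - p''' h]ₐᵇ = 0`
because `p'''` is constant, so `∫ w''² = ∫ p''² + ∫ h''²`. Hence `p` minimizes, and equality forces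
`h'' ≡ 0` on `[a, b]`, which together with `h(a) = h'(a) = 0` gives `h ≡ 0` there. Uniqueness of
the interpolant holds because a cubic with double roots at `a ≠ b` is divisible by a quartic.
-/

open Polynomial intervalIntegral Set

namespace Polynomial

theorem sq_X_sub_C_dvd_of_eval_eq_zero {R : Type*} [CommRing R] {r : R[X]} {c : R}
    (h0 : r.eval c = 0) (h1 : r.derivative.eval c = 0) : (X - C c) ^ 2 ∣ r := by
  obtain ⟨s, rfl⟩ := dvd_iff_isRoot.2 h0
  have hs : s.eval c = 0 := by simpa [derivative_mul] using h1
  obtain ⟨u, rfl⟩ := dvd_iff_isRoot.2 hs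
  exact ⟨u, by ring⟩

theorem eq_zero_of_degree_le_three_of_double_roots {K : Type*} [Field K] {a b : K} (hab : a ≠ b)
    {r : K[X]} (hr : r.degree ≤ 3) (ha0 : r.eval a = 0) (ha1 : r.derivative.eval a = 0)
    (hb0 : r.eval b = 0) (hb1 : r.derivative.eval b = 0) : r = 0 := by
  have hcop : IsCoprime ((X - C a) ^ 2) ((X - C b) ^ 2) :=
    (isCoprime_X_sub_C_of_isUnit_sub (sub_ne_zero.2 hab).isUnit).pow
  refine eq_zero_of_dvd_of_degree_lt
    (hcop.mul_dvd (sq_X_sub_C_dvd_of_eval_eq_zero ha0 ha1) (sq_X_sub_C_dvd_of_eval_eq_zero hb0 hb1))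
    (hr.trans_lt ?_)
  rw [degree_mul, degree_pow, degree_pow, degree_X_sub_C, degree_X_sub_C]
  decide

theorem exists_derivative_three_eq_C {R : Type*} [CommRing R] {p : R[X]} (hp : p.degree ≤ 3) :
    ∃ c, derivative (derivative (derivative p)) = C c := by
  refine ⟨_, eq_C_of_natDegree_eq_zero (Nat.eq_zero_of_le_zero ?_)⟩
  have := natDegree_iterate_derivative p 3
  have := natDegree_le_of_degree_le hp
  simp only [Function.iterate_succ_apply', Function.iterate_zero_apply] at *
  omega

theorem hasDerivAt_deriv_deriv_eval_of_degree_le_three {p : ℝ[X]} (hp : p.degree ≤ 3) :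
    ∃ c, ∀ t, HasDerivAt (deriv (deriv fun s => p.eval s)) c t := by
  obtain ⟨c, hc⟩ := exists_derivative_three_eq_C hp
  have h1 : deriv (fun s => p.eval s) = fun s => p.derivative.eval s := by
    funext s; exact p.deriv
  have h2 : deriv (deriv fun s => p.eval s) = fun s => p.derivative.derivative.eval s := by
    rw [h1]; funext s; exact p.derivative.deriv
  refine ⟨c, fun t => ?_⟩
  simpa [h2, hc] using p.derivative.derivative.hasDerivAt t

end Polynomial

section HermiteCubic

variable {K : Type*} [Field K] (a b α₀ α₁ β₀ β₁ : K)

/-- Taylor form at `a`; the two top coefficients solve the linear system imposed by the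
conditions at `b`. -/
noncomputable def hermiteCubic : K[X] :=
  C α₀ + C α₁ * (X - C a)
    + C ((3 * (β₀ - α₀ - α₁ * (b - a)) - (β₁ - α₁) * (b - a)) / (b - a) ^ 2) * (X - C a) ^ 2
    + C (((β₁ - α₁) * (b - a) - 2 * (β₀ - α₀ - α₁ * (b - a))) / (b - a) ^ 3) * (X - C a) ^ 3

theorem degree_hermiteCubic_le : (hermiteCubic a b α₀ α₁ β₀ β₁).degree ≤ 3 := by
  unfold hermiteCubic
  compute_degree

theorem eval_hermiteCubic_left : (hermiteCubic a b α₀ α₁ β₀ β₁).eval a = α₀ := by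
  simp [hermiteCubic]

theorem eval_derivative_hermiteCubic_left :
    (hermiteCubic a b α₀ α₁ β₀ β₁).derivative.eval a = α₁ := by
  simp [hermiteCubic, derivative_pow]

variable {a b}

theorem eval_hermiteCubic_right (hab : a ≠ b) : (hermiteCubic a b α₀ α₁ β₀ β₁).eval b = β₀ := by
  have : b - a ≠ 0 := sub_ne_zero.2 hab.symm
  simp only [hermiteCubic, eval_add, eval_mul, eval_pow, eval_sub, eval_C, eval_X]
  field_simp
  ring

theorem eval_derivative_hermiteCubic_right (hab : a ≠ b) :
    (hermiteCubic a b α₀ α₁ β₀ β₁).derivative.eval b = β₁ := by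
  have : b - a ≠ 0 := sub_ne_zero.2 hab.symm
  simp [hermiteCubic, derivative_pow]
  field_simp
  ring

end HermiteCubic

section

variable {a b : ℝ}

theorem eqOn_zero_of_deriv_eqOn_zero {f : ℝ → ℝ} (hf : Differentiable ℝ f)
    (hf' : ∀ t ∈ Icc a b, deriv f t = 0) (ha : f a = 0) : ∀ t ∈ Icc a b, f t = 0 := by
  intro t ht
  rw [constant_of_has_deriv_right_zero hf.continuous.continuousOn
    (fun x hx => hf' x (Ico_subset_Icc_self hx) ▸ (hf x).hasDerivAt.hasDerivWithinAt) t ht, ha]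

theorem eqOn_zero_of_integral_sq_eq_zero (hab : a < b) {g : ℝ → ℝ} (hg : ContinuousOn g (Icc a b))
    (h : ∫ t in a..b, g t ^ 2 = 0) : ∀ t ∈ Icc a b, g t = 0 := by
  by_contra! ⟨c, hc, hgc⟩
  exact h.not_gt <| integral_pos hab (hg.pow 2) (fun _ _ => sq_nonneg _) ⟨c, hc, by positivity⟩

theorem integral_sq_eq_add_integral_sq_sub {f g : ℝ → ℝ} (hf : Continuous f) (hg : Continuous g)
    (h : ∫ t in a..b, f t * (g t - f t) = 0) :
    ∫ t in a..b, g t ^ 2 = (∫ t in a..b, f t ^ 2) + ∫ t in a..b, (g t - f t) ^ 2 := by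
  have hint {u : ℝ → ℝ} (hu : Continuous u) : IntervalIntegrable u MeasureTheory.volume a b :=
    hu.intervalIntegrable a b
  calc ∫ t in a..b, g t ^ 2
      = ∫ t in a..b, (f t ^ 2 + (2 * (f t * (g t - f t)) + (g t - f t) ^ 2)) := by
        congr 1; ext t; ring
    _ = (∫ t in a..b, f t ^ 2) + ∫ t in a..b, (g t - f t) ^ 2 := by
        rw [integral_add (hint (by fun_prop)) (hint (by fun_prop)),
          integral_add (hint (by fun_prop)) (hint (by fun_prop)), integral_const_mul, h]
        ring

theorem integral_mul_deriv_deriv_eq_zero {u h : ℝ → ℝ} {c : ℝ} (hu : ∀ t, HasDerivAt u c t)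
    (hh : ContDiff ℝ 2 h) (ha0 : h a = 0) (ha1 : deriv h a = 0) (hb0 : h b = 0)
    (hb1 : deriv h b = 0) : ∫ t in a..b, u t * deriv (deriv h) t = 0 := by
  have hh' : Differentiable ℝ h := hh.differentiable (by norm_num)
  rw [integral_mul_deriv_eq_deriv_mul (fun t _ => hu t)
      (fun t _ => (hh.differentiable_deriv_two t).hasDerivAt) intervalIntegrable_const
      ((hh.deriv' (n := 1)).continuous_deriv_one.intervalIntegrable a b),
    integral_const_mul, integral_deriv_eq_sub (fun t _ => hh' t)
      ((hh.continuous_deriv (by norm_num)).intervalIntegrable a b)]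
  simp [ha0, ha1, hb0, hb1]

variable {w v : ℝ → ℝ}

theorem deriv_sub_of_contDiff_two (hw : ContDiff ℝ 2 w) (hv : ContDiff ℝ 2 v) :
    deriv (fun s => w s - v s) = fun s => deriv w s - deriv v s :=
  funext fun s => deriv_sub (hw.differentiable (by norm_num) s) (hv.differentiable (by norm_num) s)

theorem deriv_deriv_sub_of_contDiff_two (hw : ContDiff ℝ 2 w) (hv : ContDiff ℝ 2 v) (t : ℝ) :
    deriv (deriv fun s => w s - v s) t = deriv (deriv w) t - deriv (deriv v) t := by
  rw [deriv_sub_of_contDiff_two hw hv]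
  exact deriv_sub (hw.differentiable_deriv_two t) (hv.differentiable_deriv_two t)

theorem integral_sq_deriv_deriv_eq_add {c : ℝ} (hv3 : ∀ t, HasDerivAt (deriv (deriv v)) c t)
    (hw : ContDiff ℝ 2 w) (hv : ContDiff ℝ 2 v) (ha0 : w a = v a) (ha1 : deriv w a = deriv v a)
    (hb0 : w b = v b) (hb1 : deriv w b = deriv v b) :
    ∫ t in a..b, deriv (deriv w) t ^ 2 = (∫ t in a..b, deriv (deriv v) t ^ 2)
      + ∫ t in a..b, (deriv (deriv w) t - deriv (deriv v) t) ^ 2 := by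
  refine integral_sq_eq_add_integral_sq_sub ((hv.deriv' (n := 1)).continuous_deriv_one)
    ((hw.deriv' (n := 1)).continuous_deriv_one) ?_
  simpa only [deriv_deriv_sub_of_contDiff_two hw hv] using
    integral_mul_deriv_deriv_eq_zero hv3 (hw.sub hv) (sub_eq_zero.2 ha0)
      (by simp only [deriv_sub_of_contDiff_two hw hv, ha1, sub_self]) (sub_eq_zero.2 hb0)
      (by simp only [deriv_sub_of_contDiff_two hw hv, hb1, sub_self])

theorem eqOn_of_integral_sq_deriv_deriv_sub_eq_zero (hab : a < b) (hw : ContDiff ℝ 2 w)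
    (hv : ContDiff ℝ 2 v) (ha0 : w a = v a) (ha1 : deriv w a = deriv v a)
    (h : ∫ t in a..b, (deriv (deriv w) t - deriv (deriv v) t) ^ 2 = 0) :
    ∀ t ∈ Icc a b, w t = v t := by
  have hwv : ContDiff ℝ 2 fun s => w s - v s := hw.sub hv
  have h2 : ∀ t ∈ Icc a b, deriv (deriv fun s => w s - v s) t = 0 := by
    simpa only [deriv_deriv_sub_of_contDiff_two hw hv, Pi.sub_apply] using
      eqOn_zero_of_integral_sq_eq_zero hab (((hw.deriv' (n := 1)).continuous_deriv_one).sub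
        ((hv.deriv' (n := 1)).continuous_deriv_one)).continuousOn h
  have h1 := eqOn_zero_of_deriv_eqOn_zero hwv.differentiable_deriv_two h2
    (by simp only [deriv_sub_of_contDiff_two hw hv, ha1, sub_self])
  intro t ht
  exact sub_eq_zero.1 <| eqOn_zero_of_deriv_eqOn_zero (hwv.differentiable (by norm_num)) h1
    (sub_eq_zero.2 ha0) t ht

end

theorem stmt_19 (a b α₀ α₁ β₀ β₁ : ℝ) (hab : a < b) :
    ∃ p : Polynomial ℝ,
      (p.degree ≤ 3 ∧ p.eval a = α₀ ∧ p.derivative.eval a = α₁ ∧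
        p.eval b = β₀ ∧ p.derivative.eval b = β₁) ∧
      (∀ q : Polynomial ℝ,
        (q.degree ≤ 3 ∧ q.eval a = α₀ ∧ q.derivative.eval a = α₁ ∧
          q.eval b = β₀ ∧ q.derivative.eval b = β₁) → q = p) ∧
      (∀ w : ℝ → ℝ, ContDiff ℝ 2 w →
        w a = α₀ → deriv w a = α₁ → w b = β₀ → deriv w b = β₁ →
        (∫ t in a..b, (deriv (deriv (fun s => p.eval s)) t) ^ 2) ≤
          (∫ t in a..b, (deriv (deriv w) t) ^ 2) ∧
        ((∫ t in a..b, (deriv (deriv w) t) ^ 2) =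
            (∫ t in a..b, (deriv (deriv (fun s => p.eval s)) t) ^ 2) →
          ∀ t ∈ Set.Icc a b, w t = p.eval t)) := by
  set p := hermiteCubic a b α₀ α₁ β₀ β₁
  have hp3 : p.degree ≤ 3 := degree_hermiteCubic_le ..
  have hpa0 : p.eval a = α₀ := eval_hermiteCubic_left ..
  have hpa1 : p.derivative.eval a = α₁ := eval_derivative_hermiteCubic_left ..
  have hpb0 : p.eval b = β₀ := eval_hermiteCubic_right _ _ _ _ hab.ne
  have hpb1 : p.derivative.eval b = β₁ := eval_derivative_hermiteCubic_right _ _ _ _ hab.ne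
  refine ⟨p, ⟨hp3, hpa0, hpa1, hpb0, hpb1⟩, fun q ⟨hq3, hqa0, hqa1, hqb0, hqb1⟩ => ?_,
    fun w hw hwa0 hwa1 hwb0 hwb1 => ?_⟩
  · refine sub_eq_zero.1 <| eq_zero_of_degree_le_three_of_double_roots hab.ne
      ((degree_sub_le q p).trans (max_le hq3 hp3)) ?_ ?_ ?_ ?_ <;>
      simp [*]
  have hpC2 : ContDiff ℝ 2 fun s => p.eval s := by simpa using p.contDiff_aeval (𝕜 := ℝ) 2
  have ha0 : w a = p.eval a := hwa0.trans hpa0.symm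
  have ha1 : deriv w a = deriv (fun s => p.eval s) a := by rw [Polynomial.deriv, hwa1, hpa1]
  have hb0 : w b = p.eval b := hwb0.trans hpb0.symm
  have hb1 : deriv w b = deriv (fun s => p.eval s) b := by rw [Polynomial.deriv, hwb1, hpb1]
  obtain ⟨c, hc⟩ := hasDerivAt_deriv_deriv_eval_of_degree_le_three hp3
  have hsplit := integral_sq_deriv_deriv_eq_add hc hw hpC2 ha0 ha1 hb0 hb1
  have hdefect : 0 ≤ ∫ t in a..b, (deriv (deriv w) t - deriv (deriv fun s => p.eval s) t) ^ 2 :=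
    integral_nonneg hab.le fun t _ => sq_nonneg _
  exact ⟨by linarith, fun heq =>
    eqOn_of_integral_sq_deriv_deriv_sub_eq_zero hab hw hpC2 ha0 ha1 (by linarith)⟩
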